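/- arXiv:1309.0148 — 3 statements merged into one kernel-verified Lean document; each statement's English description precedes it below -/
import Mathlib

section
/- If a function u(s,t) = Σ_{k∈ℤ} e^{2πikt} e^{-π(2k+1)s} u_k belongs to L^p((0,∞)×S¹, ℂ) for some p > 2 (in particular, if the sum converges in L^p), then u_k = 0 for every k < 0. -/
/-! For each `s > 0` the series in `t` converges absolutely and uniformly, so the `k`-th Fourier
coefficient of `u(s, ·)` on `[0, 1]` is `e^{-π(2k+1)s} c_k`. For `k < 0` the exponential factor is
at least `1`, hence `‖c_k‖ ≤ ‖u(s, ·)‖_{L¹} ≤ ‖u(s, ·)‖_{L^p}` for every `s > 0`. A nonzero `c_k`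
thus bounds the `L^p` norm of every slice from below, which is impossible for a function in `L^p`
of the half-cylinder, whose `s`-direction has infinite measure. -/

open Real Complex MeasureTheory Set
open scoped ENNReal

lemma norm_exp_two_pi_I_int_mul (n : ℤ) (t : ℝ) : ‖Complex.exp (2 * π * I * n * t)‖ = 1 := by
  have : 2 * π * I * n * t = ((2 * π * n * t : ℝ) : ℂ) * I := by push_cast; ring
  rw [this, norm_exp_ofReal_mul_I]

lemma integral_Ioo_exp_two_pi_I_int_mul (n : ℤ) :
    ∫ t in Ioo (0:ℝ) 1, Complex.exp (2 * π * I * n * t) = if n = 0 then 1 else 0 := by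
  rw [← integral_Ioc_eq_integral_Ioo, ← intervalIntegral.integral_of_le zero_le_one]
  rcases eq_or_ne n 0 with rfl | hn
  · simp
  have hc : 2 * π * I * n ≠ 0 := by simp [Real.pi_ne_zero, hn]
  rw [if_neg hn, integral_exp_mul_complex hc]
  have : 2 * π * I * n * (1:ℝ) = n * (2 * π * I) := by push_cast; ring
  rw [this, exp_int_mul_two_pi_mul_I]
  simp

section FourierSeries

variable {a : ℤ → ℂ} {f : ℝ → ℂ}
  (hf : ∀ t : ℝ, HasSum (fun j : ℤ => Complex.exp (2 * π * I * j * t) * a j) (f t))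
include hf

lemma summable_norm_of_hasSum_fourier : Summable fun j => ‖a j‖ :=
  summable_norm_iff.mpr (by simpa using (hf 0).summable)

lemma continuous_of_hasSum_fourier : Continuous f := by
  have hf_eq : f = fun t : ℝ => ∑' j : ℤ, Complex.exp (2 * π * I * j * t) * a j :=
    funext fun t => (hf t).tsum_eq.symm
  rw [hf_eq]
  refine continuous_tsum (fun j => by fun_prop) (summable_norm_of_hasSum_fourier hf) ?_
  intro j t
  rw [norm_mul, norm_exp_two_pi_I_int_mul, one_mul]

lemma integral_Ioo_mul_exp_of_hasSum_fourier (k : ℤ) :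
    ∫ t in Ioo (0:ℝ) 1, f t * Complex.exp (-(2 * π * I * k * t)) = a k := by
  set F : ℤ → ℝ → ℂ := fun j t =>
    Complex.exp (2 * π * I * j * t) * a j * Complex.exp (-(2 * π * I * k * t))
  have hF_eq : ∀ j t, F j t = a j * Complex.exp (2 * π * I * (j - k : ℤ) * t) := by
    intro j t
    rw [show F j t = a j * (Complex.exp (2 * π * I * j * t) *
      Complex.exp (-(2 * π * I * k * t))) by ring, ← Complex.exp_add]
    congr 2; push_cast; ring
  have hF_int : ∀ j, Integrable (F j) (volume.restrict (Ioo (0:ℝ) 1)) := fun j =>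
    (Continuous.integrableOn_Icc (by fun_prop)).mono_set Ioo_subset_Icc_self
  have hF_norm : Summable fun j => ∫ t in Ioo (0:ℝ) 1, ‖F j t‖ := by
    simp only [hF_eq, norm_mul, norm_exp_two_pi_I_int_mul, mul_one]
    simpa using summable_norm_of_hasSum_fourier hf
  have hF_sum := hasSum_integral_of_summable_integral_norm hF_int hF_norm
  have hF_tsum : ∀ t, ∑' j, F j t = f t * Complex.exp (-(2 * π * I * k * t)) := fun t =>
    ((hf t).mul_right _).tsum_eq
  have hF_coeff : ∀ j, ∫ t in Ioo (0:ℝ) 1, F j t = if j = k then a k else 0 := by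
    intro j
    simp only [hF_eq, integral_const_mul, integral_Ioo_exp_two_pi_I_int_mul, sub_eq_zero]
    split_ifs with h <;> simp [h]
  simp only [hF_tsum, hF_coeff] at hF_sum
  exact hF_sum.unique (hasSum_ite_eq k (a k))

lemma enorm_le_eLpNorm_of_hasSum_fourier (k : ℤ) {p : ℝ≥0∞} (hp : 1 ≤ p) :
    ‖a k‖ₑ ≤ eLpNorm f p (volume.restrict (Ioo (0:ℝ) 1)) := by
  have : IsProbabilityMeasure (volume.restrict (Ioo (0:ℝ) 1)) := ⟨by simp⟩
  calc ‖a k‖ₑ = ‖∫ t in Ioo (0:ℝ) 1, f t * Complex.exp (-(2 * π * I * k * t))‖ₑ := by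
        rw [integral_Ioo_mul_exp_of_hasSum_fourier hf]
    _ ≤ ∫⁻ t in Ioo (0:ℝ) 1, ‖f t * Complex.exp (-(2 * π * I * k * t))‖ₑ :=
        enorm_integral_le_lintegral_enorm _
    _ = eLpNorm f 1 (volume.restrict (Ioo (0:ℝ) 1)) := by
        rw [eLpNorm_one_eq_lintegral_enorm]
        congr 1 with t
        rw [enorm_mul, ← ofReal_norm (Complex.exp _), Complex.exp_neg, norm_inv,
          norm_exp_two_pi_I_int_mul, inv_one, ENNReal.ofReal_one, mul_one]
    _ ≤ eLpNorm f p (volume.restrict (Ioo (0:ℝ) 1)) :=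
        eLpNorm_le_eLpNorm_of_exponent_le hp
          (continuous_of_hasSum_fourier hf).aestronglyMeasurable

end FourierSeries

lemma one_le_norm_exp_neg_pi_mul {k : ℤ} (hk : k < 0) {s : ℝ} (hs : 0 ≤ s) :
    1 ≤ ‖Complex.exp (-π * (2 * k + 1) * s)‖ := by
  have hk' : (k : ℝ) ≤ -1 := by exact_mod_cast Int.le_sub_one_of_lt hk
  have : -π * (2 * k + 1) * s = ((-π * (2 * k + 1) * s : ℝ) : ℂ) := by push_cast; ring
  rw [this, norm_exp_ofReal]
  exact Real.one_le_exp (mul_nonneg (by nlinarith [Real.pi_pos]) hs)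

lemma not_memLp_prod_of_le_eLpNorm_section {α β E : Type*} [MeasurableSpace α]
    [MeasurableSpace β] [NormedAddCommGroup E] {μ : Measure α} {ν : Measure β} [SFinite ν]
    (hμ : μ univ = ∞) {p : ℝ≥0∞} (hp0 : p ≠ 0) (hp : p ≠ ∞) {f : α × β → E} {C : ℝ≥0∞}
    (hC : C ≠ 0) (hle : ∀ᵐ x ∂μ, C ≤ eLpNorm (fun y => f (x, y)) p ν) :
    ¬ MemLp f p (μ.prod ν) := by
  intro hf
  have hq : 0 < p.toReal := ENNReal.toReal_pos hp0 hp
  have hfin := lintegral_rpow_enorm_lt_top_of_eLpNorm_lt_top hp0 hp hf.eLpNorm_lt_top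
  rw [lintegral_prod _ (hf.1.enorm.pow_const _)] at hfin
  have hinf : ∫⁻ _, C ^ p.toReal ∂μ ≤ ∫⁻ x, ∫⁻ y, ‖f (x, y)‖ₑ ^ p.toReal ∂ν ∂μ := by
    refine lintegral_mono_ae (hle.mono fun x hx => ?_)
    rw [lintegral_rpow_enorm_eq_rpow_eLpNorm' hq, ← eLpNorm_eq_eLpNorm' hp0 hp]
    exact ENNReal.rpow_le_rpow hx hq.le
  rw [lintegral_const, hμ, ENNReal.mul_top (by positivity)] at hinf
  exact (top_le_iff.mp hinf ▸ hfin).ne rfl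

/-- If u(s,t) = Σ_{k∈ℤ} e^{2πikt} e^{-π(2k+1)s} u_k belongs to L^p on the
half-cylinder (0,∞)×(ℝ/ℤ) for some p > 2, then u_k = 0 for every k < 0. -/
theorem statement_1 (c : ℤ → ℂ) (u : ℝ → ℝ → ℂ) (p : ℝ) (hp : 2 < p)
    (hu : ∀ s t : ℝ, 0 < s →
      HasSum (fun k : ℤ =>
        Complex.exp (2 * π * I * k * t) * Complex.exp (-π * (2 * k + 1) * s) * c k)
        (u s t))
    (hLp : MemLp (fun q : ℝ × ℝ => u q.1 q.2) (ENNReal.ofReal p)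
      ((volume.restrict (Set.Ioi (0:ℝ))).prod (volume.restrict (Set.Ioo (0:ℝ) 1)))) :
    ∀ k : ℤ, k < 0 → c k = 0 := by
  intro k hk
  by_contra hck
  have hp1 : 1 ≤ ENNReal.ofReal p := ENNReal.one_le_ofReal.mpr (by linarith)
  refine not_memLp_prod_of_le_eLpNorm_section (by simp) (by positivity) ENNReal.ofReal_ne_top
    (enorm_ne_zero.mpr hck) ?_ hLp
  filter_upwards [ae_restrict_mem measurableSet_Ioi] with s hs
  have hfourier : ∀ t : ℝ, HasSum (fun j : ℤ =>
      Complex.exp (2 * π * I * j * t) * (Complex.exp (-π * (2 * j + 1) * s) * c j)) (u s t) := by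
    simpa only [mul_assoc] using (hu s · hs)
  calc ‖c k‖ₑ ≤ ‖Complex.exp (-π * (2 * k + 1) * s)‖ₑ * ‖c k‖ₑ := by
        refine le_mul_of_one_le_left' ?_
        rw [← ofReal_norm]
        exact ENNReal.one_le_ofReal.mpr (one_le_norm_exp_neg_pi_mul hk hs.le)
    _ = ‖Complex.exp (-π * (2 * k + 1) * s) * c k‖ₑ := (enorm_mul _ _).symm
    _ ≤ _ := enorm_le_eLpNorm_of_hasSum_fourier hfourier k hp1
end

section
/- Fix φ ∈ [0,1]. Consider the infinite linear system over ℝ in variables (ξ_k, λ_k, η_k, μ_k)_{k≥0}: (1−φ)λ₁ + φ(η₀−μ₀) = 0; (1−φ)μ₁ + φ(ξ₀−λ₀) = 0; (1−φ)(ξ₀+λ₀) − φμ₁ = 0; (1−φ)(η₀+μ₀) − φλ₁ = 0; (1−φ)λ₂ + φη₁ = 0; (1−φ)μ₂ + φξ₁ = 0; and for every k ≥ 2: (1−φ)ξ_{k−1} − φμ_k = 0, (1−φ)λ_{k+1} + φη_k = 0, (1−φ)μ_{k+1} + φξ_k = 0, (1−φ)η_{k−1} − φλ_k = 0. Then every solution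 with all variables eventually zero (or bounded) satisfies ξ_k = λ_k = η_k = μ_k = 0 for all k ≥ 2, ξ₁ = η₁ = 0, and the solution space is two-dimensional, parametrized by (ξ₀, λ₀, η₀, μ₀) satisfying (1−φ)²(η₀+μ₀) + φ²(η₀−μ₀) = 0 and (1−φ)²(λ₀+ξ₀) + φ²(ξ₀−λ₀) = 0, with λ₁ = (1−2φ)η₀ + μ₀ and μ₁ = (1−2φ)ξ₀ + λ₀. -/
/-- The infinite linear system of the paper, for φ ∈ [0,1], in real variables
(ξ_k, λ_k, η_k, μ_k)_{k≥0}.  Every bounded solution satisfies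
ξ_k = λ_k = η_k = μ_k = 0 for k ≥ 2, ξ₁ = η₁ = 0, λ₁ = (1-2φ)η₀+μ₀,
μ₁ = (1-2φ)ξ₀+λ₀, and (ξ₀,λ₀,η₀,μ₀) satisfy the two constraints
(1-φ)²(η₀+μ₀)+φ²(η₀-μ₀) = 0 and (1-φ)²(λ₀+ξ₀)+φ²(ξ₀-λ₀) = 0; conversely every
(ξ₀,λ₀,η₀,μ₀) satisfying the two constraints arises from a (bounded) solution, so the
solution space is two-dimensional, parametrized by these constrained initial data. -/
theorem statement_4 (φ : ℝ) (hφ : φ ∈ Set.Icc (0:ℝ) 1) :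
    (∀ x l e m : ℕ → ℝ,
      (∃ C : ℝ, ∀ k, |x k| ≤ C ∧ |l k| ≤ C ∧ |e k| ≤ C ∧ |m k| ≤ C) →
      (1 - φ) * l 1 + φ * (e 0 - m 0) = 0 →
      (1 - φ) * m 1 + φ * (x 0 - l 0) = 0 →
      (1 - φ) * (x 0 + l 0) - φ * m 1 = 0 →
      (1 - φ) * (e 0 + m 0) - φ * l 1 = 0 →
      (1 - φ) * l 2 + φ * e 1 = 0 →
      (1 - φ) * m 2 + φ * x 1 = 0 →
      (∀ k : ℕ, 2 ≤ k →
        (1 - φ) * x (k - 1) - φ * m k = 0 ∧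
        (1 - φ) * l (k + 1) + φ * e k = 0 ∧
        (1 - φ) * m (k + 1) + φ * x k = 0 ∧
        (1 - φ) * e (k - 1) - φ * l k = 0) →
      ((∀ k : ℕ, 2 ≤ k → x k = 0 ∧ l k = 0 ∧ e k = 0 ∧ m k = 0) ∧
        x 1 = 0 ∧ e 1 = 0 ∧
        l 1 = (1 - 2 * φ) * e 0 + m 0 ∧
        m 1 = (1 - 2 * φ) * x 0 + l 0 ∧
        (1 - φ)^2 * (e 0 + m 0) + φ^2 * (e 0 - m 0) = 0 ∧
        (1 - φ)^2 * (l 0 + x 0) + φ^2 * (x 0 - l 0) = 0)) ∧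
    (∀ a b c d : ℝ,
      (1 - φ)^2 * (c + d) + φ^2 * (c - d) = 0 →
      (1 - φ)^2 * (b + a) + φ^2 * (a - b) = 0 →
      ∃ x l e m : ℕ → ℝ,
        (∃ C : ℝ, ∀ k, |x k| ≤ C ∧ |l k| ≤ C ∧ |e k| ≤ C ∧ |m k| ≤ C) ∧
        x 0 = a ∧ l 0 = b ∧ e 0 = c ∧ m 0 = d ∧
        (1 - φ) * l 1 + φ * (e 0 - m 0) = 0 ∧
        (1 - φ) * m 1 + φ * (x 0 - l 0) = 0 ∧
        (1 - φ) * (x 0 + l 0) - φ * m 1 = 0 ∧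
        (1 - φ) * (e 0 + m 0) - φ * l 1 = 0 ∧
        (1 - φ) * l 2 + φ * e 1 = 0 ∧
        (1 - φ) * m 2 + φ * x 1 = 0 ∧
        (∀ k : ℕ, 2 ≤ k →
          (1 - φ) * x (k - 1) - φ * m k = 0 ∧
          (1 - φ) * l (k + 1) + φ * e k = 0 ∧
          (1 - φ) * m (k + 1) + φ * x k = 0 ∧
          (1 - φ) * e (k - 1) - φ * l k = 0)) := by
  have hpos : (0:ℝ) < (1 - φ)^2 + φ^2 := by nlinarith [sq_nonneg (2*φ - 1)]
  have key : ∀ p q : ℝ, (1 - φ) * p - φ * q = 0 → (1 - φ) * q + φ * p = 0 →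
      p = 0 ∧ q = 0 := by
    intro p q e1 e2
    have hp : ((1 - φ)^2 + φ^2) * p = 0 := by linear_combination (1 - φ)*e1 + φ*e2
    have hq : ((1 - φ)^2 + φ^2) * q = 0 := by linear_combination (1 - φ)*e2 - φ*e1
    exact ⟨(mul_eq_zero.mp hp).resolve_left hpos.ne',
           (mul_eq_zero.mp hq).resolve_left hpos.ne'⟩
  constructor
  · intro x l e m _ h1 h2 h3 h4 h5 h6 hrec
    -- x k = 0 and m (k+1) = 0 for k ≥ 1
    have hxm : ∀ k : ℕ, 1 ≤ k → x k = 0 ∧ m (k + 1) = 0 := by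
      intro k hk
      rcases Nat.lt_or_ge k 2 with hk2 | hk2
      · have hk1 : k = 1 := by omega
        subst hk1
        have e1 := (hrec 2 (by norm_num)).1
        norm_num at e1
        exact key _ _ e1 h6
      · have e1 := (hrec (k + 1) (by omega)).1
        have e2 := (hrec k hk2).2.2.1
        simp only [Nat.add_sub_cancel] at e1
        exact key _ _ e1 e2
    have hel : ∀ k : ℕ, 1 ≤ k → e k = 0 ∧ l (k + 1) = 0 := by
      intro k hk
      rcases Nat.lt_or_ge k 2 with hk2 | hk2
      · have hk1 : k = 1 := by omega
        subst hk1
        have e1 := (hrec 2 (by norm_num)).2.2.2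
        norm_num at e1
        exact key _ _ e1 h5
      · have e1 := (hrec (k + 1) (by omega)).2.2.2
        have e2 := (hrec k hk2).2.1
        simp only [Nat.add_sub_cancel] at e1
        exact key _ _ e1 e2
    have c1 : (1 - φ)^2 * (e 0 + m 0) + φ^2 * (e 0 - m 0) = 0 := by
      linear_combination (1 - φ)*h4 + φ*h1
    have c2 : (1 - φ)^2 * (l 0 + x 0) + φ^2 * (x 0 - l 0) = 0 := by
      linear_combination (1 - φ)*h3 + φ*h2
    have hl1' : ((1 - φ)^2 + φ^2) * (l 1 - ((1 - 2*φ) * e 0 + m 0)) = 0 := by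
      linear_combination (1 - φ)*h1 - φ*h4 - (1 - 2*φ)*c1
    have hm1' : ((1 - φ)^2 + φ^2) * (m 1 - ((1 - 2*φ) * x 0 + l 0)) = 0 := by
      linear_combination (1 - φ)*h2 - φ*h3 - (1 - 2*φ)*c2
    have hl1 : l 1 = (1 - 2*φ) * e 0 + m 0 := by
      have := (mul_eq_zero.mp hl1').resolve_left hpos.ne'
      linarith
    have hm1 : m 1 = (1 - 2*φ) * x 0 + l 0 := by
      have := (mul_eq_zero.mp hm1').resolve_left hpos.ne'
      linarith
    refine ⟨?_, (hxm 1 le_rfl).1, (hel 1 le_rfl).1, hl1, hm1, c1, c2⟩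
    intro k hk
    obtain ⟨j, rfl⟩ : ∃ j, k = (j + 1) + 1 := ⟨k - 2, by omega⟩
    exact ⟨(hxm (j + 1 + 1) (by omega)).1, (hel (j + 1) (by omega)).2,
           (hel (j + 1 + 1) (by omega)).1, (hxm (j + 1) (by omega)).2⟩
  · intro a b c d hc1 hc2
    set L1 : ℝ := (1 - 2*φ) * c + d with hL1
    set M1 : ℝ := (1 - 2*φ) * a + b with hM1
    refine ⟨fun k => if k = 0 then a else 0,
            fun k => if k = 0 then b else if k = 1 then L1 else 0,
            fun k => if k = 0 then c else 0,
            fun k => if k = 0 then d else if k = 1 then M1 else 0,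
            ?_, by norm_num, by norm_num, by norm_num, by norm_num,
            ?_, ?_, ?_, ?_, by norm_num, by norm_num, ?_⟩
    · refine ⟨|a| + |b| + |c| + |d| + |L1| + |M1|, fun k => ?_⟩
      have ha := abs_nonneg a; have hb := abs_nonneg b; have hcc := abs_nonneg c
      have hd := abs_nonneg d; have hl := abs_nonneg L1; have hm := abs_nonneg M1
      rcases k with _ | _ | k <;> refine ⟨?_, ?_, ?_, ?_⟩ <;> simp <;> linarith
    · norm_num; linear_combination hc1
    · norm_num; linear_combination hc2
    · norm_num; linear_combination hc2
    · norm_num; linear_combination hc1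
    · intro k hk
      have h1 : k ≠ 0 := by omega
      have h2 : k ≠ 1 := by omega
      have h3 : k - 1 ≠ 0 := by omega
      have h4 : k + 1 ≠ 0 := by omega
      have h5 : k + 1 ≠ 1 := by omega
      rcases Nat.lt_or_ge k 3 with hk3 | hk3
      · have : k = 2 := by omega
        subst this; norm_num
      · have h6 : k - 1 ≠ 1 := by omega
        simp [h1, h2, h3, h4, h5, h6]
end

section
/- The function u(s) = i·e^{−πs} spans the kernel of the operator D : u ↦ ∂_s u − i∂_t u + π u acting on W^{1,p} maps (0,∞)×S¹ → ℂ whose boundary trace at s = 0 takes values in iℝ; that is, every such solution of ∂_s u − i∂_t u + πu = 0 with u(0,t) ∈ iℝ for all t is a real multiple of i·e^{−πs}. -/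
open Real Complex MeasureTheory Set
open scoped ENNReal NNReal

local instance : Fact ((0:ℝ) < 1) := ⟨one_pos⟩

lemma aux_unique (f : C(AddCircle (1:ℝ), ℂ)) (h : ∀ n : ℤ, fourierCoeff (⇑f) n = 0) :
    ∀ x, f x = 0 := by
  have hs : Summable (fourierCoeff (⇑f)) := by
    rw [funext h]; exact summable_zero
  have hsum := hasSum_fourier_series_of_summable hs
  simp only [h, zero_smul] at hsum
  have h0 : f = 0 := hsum.unique hasSum_zero
  intro x; rw [h0]; rfl

lemma aux_ode {c : ℝ → ℂ} {μ : ℂ} (hc : Continuous c)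
    (hd : ∀ s : ℝ, 0 < s → HasDerivAt c (μ * c s) s) :
    ∀ s : ℝ, 0 ≤ s → c s = c 0 * Complex.exp (μ * s) := by
  set h : ℝ → ℂ := fun s => c s * Complex.exp (-μ * s) with hh
  have hcont : Continuous h := by
    apply hc.mul
    exact Complex.continuous_exp.comp (continuous_const.mul Complex.continuous_ofReal)
  have hder : ∀ s : ℝ, 0 < s → HasDerivAt h 0 s := by
    intro s hs
    have he : HasDerivAt (fun s : ℝ => Complex.exp (-μ * s)) (Complex.exp (-μ * s) * -μ) s := by
      have h2 : HasDerivAt (fun s : ℝ => -μ * (s:ℂ)) (-μ) s := by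
        simpa using (Complex.ofRealCLM.hasDerivAt (x := s)).const_mul (-μ)
      simpa [mul_comm] using h2.cexp
    have h1 : HasDerivAt h (μ * c s * Complex.exp (-μ * s) + c s * (Complex.exp (-μ * s) * -μ)) s :=
      (hd s hs).mul he
    convert h1 using 1
    ring
  have key : ∀ s : ℝ, 0 < s → h s = h 0 := by
    intro s hs
    have const : ∀ ε : ℝ, 0 < ε → ε ≤ s → h s = h ε := by
      intro ε hε hεs
      exact constant_of_has_deriv_right_zero (hcont.continuousOn)
        (fun x hx => (hder x (lt_of_lt_of_le hε hx.1)).hasDerivWithinAt)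
        s (Set.right_mem_Icc.mpr hεs)
    have t1 : Filter.Tendsto h (nhdsWithin 0 (Set.Ioi 0)) (nhds (h 0)) :=
      (hcont.tendsto 0).mono_left nhdsWithin_le_nhds
    have t2 : Filter.Tendsto h (nhdsWithin 0 (Set.Ioi 0)) (nhds (h s)) := by
      apply Filter.Tendsto.congr' _ tendsto_const_nhds
      filter_upwards [Ioo_mem_nhdsGT_of_mem (Set.left_mem_Ico.mpr hs)] with ε hε
      exact const ε hε.1 hε.2.le
    exact (tendsto_nhds_unique t1 t2).symm
  intro s hs
  rcases eq_or_lt_of_le hs with rfl|hs'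
  · simp
  · have h1 := key s hs'
    have h2 : h 0 = c 0 := by simp [hh]
    rw [h2] at h1
    have h3 : c s = h s * Complex.exp (μ * s) := by
      show c s = c s * Complex.exp (-μ * s) * Complex.exp (μ * s)
      rw [mul_assoc, ← Complex.exp_add]
      simp
    rw [h3, h1]

/-- The kernel of D : u ↦ ∂ₛu - i∂ₜu + πu on W^{1,p} maps of the half-cylinder with
boundary trace in iℝ is spanned by i e^{-πs}: every such solution with
u(0,t) ∈ iℝ for all t is a real multiple of i e^{-πs}. -/
theorem statement_12 (p : ℝ) (hp : 2 < p) (u : ℝ → ℝ → ℂ)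
    (hcont : Continuous (fun q : ℝ × ℝ => u q.1 q.2))
    (hdiff : ContDiffOn ℝ (⊤ : ℕ∞) (fun q : ℝ × ℝ => u q.1 q.2) (Set.Ioi (0:ℝ) ×ˢ Set.univ))
    (hper : ∀ s t : ℝ, u s (t + 1) = u s t)
    (hLp : MemLp (fun q : ℝ × ℝ => u q.1 q.2) (ENNReal.ofReal p)
      ((volume.restrict (Set.Ioi (0:ℝ))).prod (volume.restrict (Set.Ioo (0:ℝ) 1))))
    (hpde : ∀ s t : ℝ, 0 < s →
      deriv (fun σ => u σ t) s - I * deriv (fun τ => u s τ) t + (π : ℂ) * u s t = 0)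
    (hbdry : ∀ t : ℝ, ∃ a : ℝ, u 0 t = (a : ℂ) * I) :
    ∃ a : ℝ, ∀ s t : ℝ, 0 ≤ s → u s t = (a : ℂ) * I * (Real.exp (-π * s) : ℝ) := by
  -- notation
  set F : ℝ × ℝ → ℂ := fun q => u q.1 q.2 with hFdef
  set e : ℤ → ℝ → ℂ := fun k t => fourier (-k) (t : AddCircle (1:ℝ)) with hedef
  set c : ℤ → ℝ → ℂ := fun k s => ∫ t in (0:ℝ)..1, e k t * u s t with hcdef
  set dt : ℝ → ℝ → ℂ := fun s t => deriv (fun τ => u s τ) t with hdtdef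
  set ds : ℝ → ℝ → ℂ := fun s t => deriv (fun σ => u σ t) s with hdsdef
  have hU : IsOpen (Set.Ioi (0:ℝ) ×ˢ (Set.univ : Set ℝ)) := isOpen_Ioi.prod isOpen_univ
  -- basic continuity facts about fourier monomials
  have hecont : ∀ k : ℤ, Continuous (e k) := by
    intro k
    exact (map_continuous (fourier (-k))).comp (AddCircle.continuous_mk' 1)
  have henorm : ∀ (k : ℤ) (t : ℝ), ‖e k t‖ = 1 := by
    intro k t
    simp only [hedef, fourier_apply]
    exact Circle.norm_coe _
  have hucont : ∀ s : ℝ, Continuous (fun t => u s t) :=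
    fun s => hcont.comp (continuous_const.prodMk continuous_id)
  -- partial derivatives
  have hFdiffAt : ∀ q : ℝ × ℝ, 0 < q.1 → DifferentiableAt ℝ F q := fun q hq =>
    (hdiff.differentiableOn (by simp)).differentiableAt (hU.mem_nhds ⟨hq, trivial⟩)
  have hdsF : ∀ s t : ℝ, 0 < s →
      HasDerivAt (fun σ => u σ t) (fderiv ℝ F (s, t) ((1:ℝ), (0:ℝ))) s := by
    intro s t hs
    have h1 : HasDerivAt (fun σ : ℝ => ((σ, t) : ℝ × ℝ)) ((1:ℝ), (0:ℝ)) s :=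
      (hasDerivAt_id s).prodMk (hasDerivAt_const s t)
    exact (hFdiffAt (s, t) hs).hasFDerivAt.comp_hasDerivAt s h1
  have hdtF : ∀ s t : ℝ, 0 < s →
      HasDerivAt (fun τ => u s τ) (fderiv ℝ F (s, t) ((0:ℝ), (1:ℝ))) t := by
    intro s t hs
    have h1 : HasDerivAt (fun τ : ℝ => ((s, τ) : ℝ × ℝ)) ((0:ℝ), (1:ℝ)) t :=
      (hasDerivAt_const t s).prodMk (hasDerivAt_id t)
    exact (hFdiffAt (s, t) hs).hasFDerivAt.comp_hasDerivAt t h1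
  have hds' : ∀ s t : ℝ, 0 < s → HasDerivAt (fun σ => u σ t) (ds s t) s := by
    intro s t hs
    have h2 := hdsF s t hs
    have h3 : ds s t = fderiv ℝ F (s, t) ((1:ℝ), (0:ℝ)) := h2.deriv
    rw [h3]; exact h2
  have hdt' : ∀ s t : ℝ, 0 < s → HasDerivAt (fun τ => u s τ) (dt s t) t := by
    intro s t hs
    have h2 := hdtF s t hs
    have h3 : dt s t = fderiv ℝ F (s, t) ((0:ℝ), (1:ℝ)) := h2.deriv
    rw [h3]; exact h2
  have hfderiv_cont : ContinuousOn (fderiv ℝ F) (Set.Ioi 0 ×ˢ Set.univ) :=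
    hdiff.continuousOn_fderiv_of_isOpen hU (mod_cast le_top)
  have hds_cont : ContinuousOn (fun q : ℝ × ℝ => ds q.1 q.2) (Set.Ioi 0 ×ˢ Set.univ) := by
    apply ContinuousOn.congr (ContinuousOn.clm_apply hfderiv_cont continuousOn_const)
    intro q hq
    exact (hdsF q.1 q.2 hq.1).deriv
  have hdt_cont : ContinuousOn (fun q : ℝ × ℝ => dt q.1 q.2) (Set.Ioi 0 ×ˢ Set.univ) := by
    apply ContinuousOn.congr (ContinuousOn.clm_apply hfderiv_cont continuousOn_const)
    intro q hq
    exact (hdtF q.1 q.2 hq.1).deriv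
  have hdt_cont' : ∀ s : ℝ, 0 < s → Continuous (fun t => dt s t) := by
    intro s hs
    rw [← continuousOn_univ]
    exact (hdt_cont.comp ((continuous_const.prodMk continuous_id).continuousOn)
      (fun t _ => ⟨hs, trivial⟩))
  -- continuity of the Fourier coefficients in s
  have hccont : ∀ k : ℤ, Continuous (c k) := by
    intro k
    apply intervalIntegral.continuous_parametric_intervalIntegral_of_continuous'
    exact ((hecont k).comp continuous_snd).mul hcont
  -- the ODE for the Fourier coefficients
  have hds_cont' : ∀ s : ℝ, 0 < s → Continuous (fun t => ds s t) := by
    intro s hs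
    rw [← continuousOn_univ]
    exact (hds_cont.comp ((continuous_const.prodMk continuous_id).continuousOn)
      (fun t _ => ⟨hs, trivial⟩))
  have hODE : ∀ (k : ℤ) (s : ℝ), 0 < s →
      HasDerivAt (c k) ((((-2*π*(k:ℝ) - π : ℝ)) : ℂ) * c k s) s := by
    intro k s₀ hs₀
    have hball : Metric.ball s₀ (s₀/2) ⊆ Set.Ioi (0:ℝ) := by
      intro x hx
      rw [Real.ball_eq_Ioo] at hx
      have := hx.1
      simp only [Set.mem_Ioi]
      linarith
    -- uniform bound for the s-derivative near s₀
    obtain ⟨C, hC⟩ := (IsCompact.prod (isCompact_Icc (a := s₀/2) (b := s₀ + s₀))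
        (isCompact_Icc (a := (0:ℝ)) (b := 1))).exists_bound_of_continuousOn
        (hds_cont.mono (fun q hq => ⟨lt_of_lt_of_le (by linarith) hq.1.1, trivial⟩))
    have key := intervalIntegral.hasDerivAt_integral_of_dominated_loc_of_deriv_le
      (F := fun σ t => e k t * u σ t) (F' := fun σ t => e k t * ds σ t)
      (x₀ := s₀) (a := (0:ℝ)) (b := (1:ℝ)) (s := Metric.ball s₀ (s₀/2)) (bound := fun _ => |C|)
      (μ := volume)
      (Metric.ball_mem_nhds _ (by positivity))
      (Filter.Eventually.of_forall (fun σ => (((hecont k).mul (hucont σ))).aestronglyMeasurable))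
      (((hecont k).mul (hucont s₀)).intervalIntegrable 0 1)
      (((hecont k).mul (hds_cont' s₀ hs₀)).aestronglyMeasurable)
      (Filter.Eventually.of_forall (fun t ht x hx => by
        rw [norm_mul, henorm, one_mul]
        refine le_trans (hC (x, t) ⟨?_, ?_⟩) (le_abs_self C)
        · rw [Real.ball_eq_Ioo] at hx
          constructor <;> [linarith [hx.1]; linarith [hx.2]]
        · rw [Set.uIoc_of_le (zero_le_one : (0:ℝ) ≤ 1)] at ht
          exact ⟨ht.1.le, ht.2⟩))
      intervalIntegrable_const
      (Filter.Eventually.of_forall (fun t ht x hx =>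
        HasDerivAt.const_mul (e k t) (hds' x t (hball hx))))
    have hD := key.2
    -- compute the integral of the derivative
    have hintB : IntervalIntegrable (fun t => e k t * dt s₀ t) volume 0 1 :=
      ((hecont k).mul (hdt_cont' s₀ hs₀)).intervalIntegrable 0 1
    have hintU : IntervalIntegrable (fun t => e k t * u s₀ t) volume 0 1 :=
      ((hecont k).mul (hucont s₀)).intervalIntegrable 0 1
    have hsplit : (∫ t in (0:ℝ)..1, e k t * ds s₀ t)
        = I * (∫ t in (0:ℝ)..1, e k t * dt s₀ t) - (π:ℂ) * c k s₀ := by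
      rw [← intervalIntegral.integral_const_mul, ← intervalIntegral.integral_const_mul,
        ← intervalIntegral.integral_sub (hintB.const_mul I) (hintU.const_mul (π:ℂ))]
      apply intervalIntegral.integral_congr
      intro t ht
      simp only []
      have hpp := hpde s₀ t hs₀
      have hdseq : ds s₀ t = I * dt s₀ t - (π:ℂ) * u s₀ t := by
        simp only [hdsdef, hdtdef]
        linear_combination hpp
      rw [hdseq]
      ring
    -- integration by parts
    have hparts : (∫ t in (0:ℝ)..1, e k t * dt s₀ t) = (2*π*I*(k:ℂ)) * c k s₀ := by
      have hder : ∀ t ∈ Set.uIcc (0:ℝ) 1, HasDerivAt (fun τ => e k τ * u s₀ τ)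
          ((-2*π*I*(k:ℂ)) * (e k t * u s₀ t) + e k t * dt s₀ t) t := by
        intro t ht
        have h1 : HasDerivAt (fun τ : ℝ => e k τ)
            (-2 * π * I * (k:ℂ) / (1:ℝ) * e k t) t := hasDerivAt_fourier_neg 1 k t
        have h2 : HasDerivAt (fun τ => e k τ * u s₀ τ)
            (-2 * π * I * (k:ℂ) / (1:ℝ) * e k t * u s₀ t + e k t * dt s₀ t) t :=
          h1.mul (hdt' s₀ t hs₀)
        convert h2 using 1
        push_cast
        ring
      have hint : IntervalIntegrable
          (fun t => (-2*π*I*(k:ℂ)) * (e k t * u s₀ t) + e k t * dt s₀ t) volume 0 1 :=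
        (hintU.const_mul _).add hintB
      have h2 := intervalIntegral.integral_eq_sub_of_hasDerivAt hder hint
      have hu10 : u s₀ 1 = u s₀ 0 := by
        have := hper s₀ 0; rwa [zero_add] at this
      have he10 : e k 1 = e k 0 := by
        simp only [hedef]
        congr 1
        have h1 : ((1:ℝ) : AddCircle (1:ℝ)) = 0 := AddCircle.coe_period 1
        have h0 : ((0:ℝ) : AddCircle (1:ℝ)) = 0 := by norm_num
        rw [h1, h0]
      rw [hu10, he10, sub_self] at h2
      rw [intervalIntegral.integral_add (hintU.const_mul _) hintB,
        intervalIntegral.integral_const_mul] at h2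
      linear_combination h2
    rw [hsplit, hparts] at hD
    refine hD.congr_deriv ?_
    have hI : (I:ℂ) * I = -1 := Complex.I_mul_I
    push_cast
    linear_combination (2*(π:ℂ)*(k:ℂ)*(c k s₀)) * hI
  have hformula : ∀ (k : ℤ) (s : ℝ), 0 ≤ s →
      c k s = c k 0 * Complex.exp ((((-2*π*(k:ℝ) - π : ℝ)) : ℂ) * s) := by
    intro k
    exact aux_ode (hccont k) (hODE k)
  -- negative coefficients vanish (Lp condition)
  have hp1 : (1:ℝ) < p := by linarith
  have hp0 : (0:ℝ) < p := by linarith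
  have hneg : ∀ k : ℤ, k < 0 → c k 0 = 0 := by
    intro k hk
    by_contra hne
    set m : ℝ := ‖c k 0‖ with hm
    have hm0 : 0 < m := norm_pos_iff.mpr hne
    have hlow2 : ∀ s : ℝ, 0 < s →
        ENNReal.ofReal m ^ p ≤ ∫⁻ t in Set.Ioo (0:ℝ) 1, (‖u s t‖₊ : ℝ≥0∞) ^ p := by
      intro s hs
      have h1 : m ≤ ‖c k s‖ := by
        rw [hformula k s hs.le, norm_mul]
        have hne : ‖Complex.exp ((((-2*π*(k:ℝ) - π : ℝ)) : ℂ) * s)‖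
            = Real.exp ((-2*π*(k:ℝ) - π) * s) := by
          rw [← Complex.ofReal_mul, Complex.norm_exp, Complex.ofReal_re]
        rw [hne]
        nth_rewrite 1 [← mul_one m]
        apply mul_le_mul_of_nonneg_left _ (norm_nonneg _)
        apply Real.one_le_exp
        have hπ := Real.pi_pos
        have hk1 : (k:ℝ) ≤ -1 := by
          have : k ≤ -1 := by omega
          exact_mod_cast this
        have hcoef : (0:ℝ) ≤ -2*π*(k:ℝ) - π := by nlinarith
        exact mul_nonneg hcoef hs.le
      have h2 : ‖c k s‖ ≤ ∫ t in (0:ℝ)..1, ‖u s t‖ := by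
        refine le_trans (intervalIntegral.norm_integral_le_integral_norm zero_le_one) ?_
        refine le_of_eq (intervalIntegral.integral_congr fun t ht => ?_)
        rw [norm_mul, henorm, one_mul]
      have h3 : ENNReal.ofReal (∫ t in (0:ℝ)..1, ‖u s t‖)
          = ∫⁻ t in Set.Ioo (0:ℝ) 1, (‖u s t‖₊ : ℝ≥0∞) := by
        rw [intervalIntegral.integral_of_le zero_le_one,
          ← Measure.restrict_congr_set MeasureTheory.Ioo_ae_eq_Ioc,
          ofReal_integral_eq_lintegral_ofReal
            (((hucont s).norm.integrableOn_Icc).mono_set Set.Ioo_subset_Icc_self)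
            (Filter.Eventually.of_forall (fun t => norm_nonneg _))]
        simp_rw [ofReal_norm, enorm_eq_nnnorm]
      have hq := Real.HolderConjugate.conjExponent hp1
      have h4 := ENNReal.lintegral_mul_le_Lp_mul_Lq (volume.restrict (Set.Ioo (0:ℝ) 1)) hq
        (f := fun t => (‖u s t‖₊ : ℝ≥0∞)) (g := fun _ => 1)
        ((hucont s).measurable.nnnorm.coe_nnreal_ennreal.aemeasurable) aemeasurable_const
      have h5 : ENNReal.ofReal m ≤ (∫⁻ t in Set.Ioo (0:ℝ) 1, (‖u s t‖₊ : ℝ≥0∞) ^ p) ^ (1/p) := by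
        calc ENNReal.ofReal m ≤ ENNReal.ofReal (∫ t in (0:ℝ)..1, ‖u s t‖) :=
              ENNReal.ofReal_le_ofReal (h1.trans h2)
          _ = ∫⁻ t in Set.Ioo (0:ℝ) 1, (‖u s t‖₊ : ℝ≥0∞) := h3
          _ ≤ _ := by
              simpa [Pi.mul_apply, mul_one, ENNReal.one_rpow, MeasureTheory.lintegral_one,
                Measure.restrict_apply_univ, Real.volume_Ioo, sub_zero,
                ENNReal.ofReal_one] using h4
      have h6 := ENNReal.rpow_le_rpow h5 hp0.le
      rwa [← ENNReal.rpow_mul, one_div, inv_mul_cancel₀ (ne_of_gt hp0),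
        ENNReal.rpow_one] at h6
    -- global integrability
    have hfmeas : Measurable (fun q : ℝ × ℝ => (‖F q‖₊ : ℝ≥0∞) ^ p) :=
      (hcont.measurable.nnnorm.coe_nnreal_ennreal).pow_const p
    have hfin : (∫⁻ q, (‖F q‖₊ : ℝ≥0∞) ^ p
        ∂((volume.restrict (Set.Ioi (0:ℝ))).prod (volume.restrict (Set.Ioo (0:ℝ) 1)))) < ⊤ := by
      have h7 := lintegral_rpow_enorm_lt_top_of_eLpNorm_lt_top (f := F)
        (p := ENNReal.ofReal p)
        (by simp [ENNReal.ofReal_eq_zero, not_le, hp0])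
        ENNReal.ofReal_ne_top hLp.2
      rwa [ENNReal.toReal_ofReal hp0.le] at h7
    rw [MeasureTheory.lintegral_prod _ hfmeas.aemeasurable] at hfin
    have hBne : (ENNReal.ofReal m) ^ p ≠ 0 := by
      have hne0 : ENNReal.ofReal m ≠ 0 := by
        simp [ENNReal.ofReal_eq_zero, not_le, hm0]
      simp [ENNReal.rpow_eq_zero_iff, hne0, hp0, not_lt_of_ge hp0.le]
    have hinner_meas : Measurable (fun s : ℝ =>
        ∫⁻ t in Set.Ioo (0:ℝ) 1, (‖F (s, t)‖₊ : ℝ≥0∞) ^ p) :=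
      Measurable.lintegral_prod_right' (f := fun q : ℝ × ℝ => (‖F q‖₊ : ℝ≥0∞) ^ p) hfmeas
    have hmono : ∫⁻ _ in Set.Ioi (0:ℝ), (ENNReal.ofReal m) ^ p
        ≤ ∫⁻ s in Set.Ioi (0:ℝ), ∫⁻ t in Set.Ioo (0:ℝ) 1, (‖F (s, t)‖₊ : ℝ≥0∞) ^ p :=
      MeasureTheory.setLIntegral_mono hinner_meas (fun s hs => hlow2 s hs)
    have htop : (⊤:ℝ≥0∞) ≤ ∫⁻ s in Set.Ioi (0:ℝ),
        ∫⁻ t in Set.Ioo (0:ℝ) 1, (‖F (s, t)‖₊ : ℝ≥0∞) ^ p := by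
      refine le_trans (le_of_eq ?_) hmono
      rw [MeasureTheory.setLIntegral_const, Real.volume_Ioi, ENNReal.mul_top hBne]
    exact absurd hfin (not_lt_of_ge htop)
  -- boundary condition: coefficients with k ≥ 1 vanish, k = 0 is purely imaginary
  have hconj : ∀ k : ℤ, (starRingEnd ℂ) (c k 0) = - c (-k) 0 := by
    intro k
    have hmink : ∀ t : ℝ, (starRingEnd ℂ) (e k t * u 0 t) = - (e (-k) t * u 0 t) := by
      intro t
      obtain ⟨a, ha⟩ := hbdry t
      have h1 : (starRingEnd ℂ) (u 0 t) = - u 0 t := by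
        rw [ha, map_mul, Complex.conj_I, Complex.conj_ofReal]; ring
      have h2 : (starRingEnd ℂ) (e k t) = e (-k) t := by
        simp only [hedef]
        rw [fourier_neg (n := -k)]
      rw [map_mul, h1, h2]; ring
    simp only [hcdef]
    rw [intervalIntegral.integral_of_le zero_le_one, intervalIntegral.integral_of_le zero_le_one,
      ← integral_conj, ← integral_neg]
    exact integral_congr_ae (Filter.Eventually.of_forall (fun t => hmink t))
  have hpos : ∀ k : ℤ, 0 < k → c k 0 = 0 := by
    intro k hk
    have h1 := hconj (-k)
    rw [neg_neg] at h1
    have h2 : c (-k) 0 = 0 := hneg (-k) (by omega)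
    rw [h2, map_zero] at h1
    exact (neg_eq_zero.mp h1.symm)
  have hzero_im : c 0 0 = ((c 0 0).im : ℂ) * I := by
    have h1 := hconj 0
    rw [neg_zero] at h1
    have : (c 0 0).re = 0 := by
      have := congrArg Complex.re h1
      simp at this
      linarith
    apply Complex.ext <;> simp [this]
  -- all nonzero coefficients vanish everywhere
  have hall : ∀ k : ℤ, k ≠ 0 → ∀ s : ℝ, 0 ≤ s → c k s = 0 := by
    intro k hk s hs
    rw [hformula k s hs]
    rcases lt_or_gt_of_ne hk with h|h
    · rw [hneg k h, zero_mul]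
    · rw [hpos k h, zero_mul]
  -- Fourier uniqueness: u s t = c 0 s for all t
  have hrep : ∀ s : ℝ, 0 ≤ s → ∀ t : ℝ, u s t = c 0 s := by
    intro s hs
    set g : ℝ → ℂ := fun t => u s t - c 0 s with hgdef
    have hgcont : Continuous g := (hucont s).sub continuous_const
    have hgper : Function.Periodic g 1 := by
      intro x
      simp only [hgdef]
      rw [hper s x]
    have hG : Continuous (AddCircle.liftIco 1 0 g) :=
      AddCircle.liftIco_zero_continuous (by simpa using (hgper 0).symm) hgcont.continuousOn
    set G : C(AddCircle (1:ℝ), ℂ) := ⟨AddCircle.liftIco 1 0 g, hG⟩ with hGdef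
    have hGg : ∀ x : ℝ, x ∈ Set.Ico (0:ℝ) 1 → G (x : AddCircle (1:ℝ)) = g x := by
      intro x hx
      simp only [hGdef, ContinuousMap.coe_mk]
      exact AddCircle.liftIco_zero_coe_apply hx
    have hco10 : ((1:ℝ) : AddCircle (1:ℝ)) = ((0:ℝ) : AddCircle (1:ℝ)) := by
      rw [AddCircle.coe_period 1]; norm_num
    have hGg' : ∀ x : ℝ, x ∈ Set.Icc (0:ℝ) 1 → G (x : AddCircle (1:ℝ)) = g x := by
      intro x hx
      rcases eq_or_lt_of_le hx.2 with heq|hlt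
      · subst heq
        rw [hco10, hGg 0 ⟨le_refl 0, one_pos⟩]
        have hg01 := hgper 0
        rw [zero_add] at hg01
        exact hg01.symm
      · exact hGg x ⟨hx.1, hlt⟩
    have heint : ∀ n : ℤ, n ≠ 0 → (∫ x in (0:ℝ)..1, e n x) = 0 := by
      intro n hn
      have ha : ∀ x ∈ Set.uIcc (0:ℝ) 1, HasDerivAt
          (fun y : ℝ => ((1:ℝ):ℂ) / (-2 * π * I * n) * fourier (-n) (y : AddCircle (1:ℝ)))
          (e n x) x := fun x _ => has_antideriv_at_fourier_neg ⟨one_pos⟩ hn x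
      rw [intervalIntegral.integral_eq_sub_of_hasDerivAt ha ((hecont n).intervalIntegrable 0 1)]
      rw [hco10, sub_self]
    have hGcoeff : ∀ n : ℤ, fourierCoeff (⇑G) n = 0 := by
      intro n
      rw [fourierCoeff_eq_intervalIntegral (⇑G) n 0, zero_add]
      have hcongr : ∀ x ∈ Set.uIcc (0:ℝ) 1,
          fourier (-n) (x : AddCircle (1:ℝ)) • (⇑G) ((x:ℝ) : AddCircle (1:ℝ))
            = e n x * u s x - c 0 s * e n x := by
        intro x hx
        rw [Set.uIcc_of_le zero_le_one] at hx
        rw [smul_eq_mul, hGg' x hx]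
        simp only [hgdef, hedef]
        ring
      rw [intervalIntegral.integral_congr hcongr,
        intervalIntegral.integral_sub (show IntervalIntegrable (fun x => e n x * u s x) volume 0 1 from
          ((hecont n).mul (hucont s)).intervalIntegrable 0 1)
          (show IntervalIntegrable (fun x => c 0 s * e n x) volume 0 1 from
          (continuous_const.mul (hecont n)).intervalIntegrable 0 1),
        intervalIntegral.integral_const_mul]
      by_cases hn : n = 0
      · subst hn
        have he0 : (∫ x in (0:ℝ)..1, e 0 x) = 1 := by
          have hone : ∀ x : ℝ, e 0 x = 1 := by
            intro x
            simp only [hedef, neg_zero]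
            exact fourier_zero
          rw [intervalIntegral.integral_congr (fun x _ => hone x)]
          simp
        rw [he0]
        show (1/(1:ℝ)) • (c 0 s - c 0 s * 1) = 0
        simp
      · rw [heint n hn]
        show (1/(1:ℝ)) • (c n s - c 0 s * 0) = 0
        rw [hall n hn s hs]
        simp
    have hGzero := aux_unique G hGcoeff
    intro t
    have hfr : Int.fract t ∈ Set.Ico (0:ℝ) 1 := ⟨Int.fract_nonneg t, Int.fract_lt_one t⟩
    have h1 : g (Int.fract t) = 0 := by
      rw [← hGg _ hfr]
      exact hGzero _
    have h2 : g (Int.fract t) = g t := by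
      have h3 := hgper.sub_int_mul_eq (x := t) (n := ⌊t⌋)
      rw [mul_one] at h3
      exact h3
    have h4 : g t = 0 := h2.symm.trans h1
    exact sub_eq_zero.mp h4
  -- conclusion
  refine ⟨(c 0 0).im, fun s t hs => ?_⟩
  have harg : ((((-2*π*(((0:ℤ)):ℝ) - π : ℝ)) : ℂ) * (s:ℂ)) = ((-π * s : ℝ) : ℂ) := by
    push_cast; ring
  rw [hrep s hs t, hformula 0 s hs, harg, ← Complex.ofReal_exp]
  conv_lhs => rw [hzero_im]
end
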